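/- arXiv:2205.11943 — 5 statements merged into one kernel-verified Lean document; each statement's English description precedes it below -/
import Mathlib

section
/- The d-skeleton functor is left adjoint to the d-coskeleton functor: for diffeological spaces A and X, a set-theoretic map f : A → X is smooth as a map A_d → X if and only if it is smooth as a map A → X_{(d)}. -/
/-- A family of parametrizations of a set `X`: for each `n`, a predicate on pairs
`(U, p)` where `U ⊆ ℝⁿ` and `p : ℝⁿ → X` (thought of as defined on `U`). -/
def PlotFamily (X : Type u) :=
  ∀ n : ℕ, Set (Fin n → ℝ) → ((Fin n → ℝ) → X) → Prop

/-- `D` is a diffeology on `X`: domains of plots are open, all constant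
parametrizations are plots, being a plot only depends on the values on the domain,
plots satisfy locality, and plots are closed under precomposition with smooth maps
between Euclidean open sets. -/
structure IsDiffeology {X : Type u} (D : PlotFamily X) : Prop where
  isOpen : ∀ {n : ℕ} {U : Set (Fin n → ℝ)} {p : (Fin n → ℝ) → X}, D n U p → IsOpen U
  const : ∀ (n : ℕ) (U : Set (Fin n → ℝ)), IsOpen U → ∀ x : X, D n U (fun _ => x)
  congr : ∀ {n : ℕ} {U : Set (Fin n → ℝ)} {p q : (Fin n → ℝ) → X},
    D n U p → (∀ x ∈ U, q x = p x) → D n U q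
  locality : ∀ {n : ℕ} {U : Set (Fin n → ℝ)} {p : (Fin n → ℝ) → X}, IsOpen U →
    (∀ x ∈ U, ∃ W, IsOpen W ∧ x ∈ W ∧ W ⊆ U ∧ D n W p) → D n U p
  precomp : ∀ {n k : ℕ} {U : Set (Fin n → ℝ)} {V : Set (Fin k → ℝ)}
    {p : (Fin n → ℝ) → X} {F : (Fin k → ℝ) → (Fin n → ℝ)},
    D n U p → IsOpen V → ContDiffOn ℝ (⊤ : ℕ∞) F V → Set.MapsTo F V U → D k V (p ∘ F)

/-- A map between diffeological spaces is smooth if it sends plots to plots. -/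
def IsSmoothMap {X Y : Type*} (DX : PlotFamily X) (DY : PlotFamily Y) (f : X → Y) : Prop :=
  ∀ ⦃n : ℕ⦄ ⦃U : Set (Fin n → ℝ)⦄ ⦃p : (Fin n → ℝ) → X⦄, DX n U p → DY n U (f ∘ p)

/-- The `d`-coskeleton plot family: `p : U → X` is a plot iff `U` is open and the
precomposition of `p` with any smooth map from a Euclidean open set of dimension
`≤ d` into `U` is a plot of `X`. -/
def coskPlots {X : Type*} (D : PlotFamily X) (d : ℕ) : PlotFamily X :=
  fun n U p => IsOpen U ∧ ∀ (k : ℕ), k ≤ d →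
    ∀ (V : Set (Fin k → ℝ)) (F : (Fin k → ℝ) → (Fin n → ℝ)),
      IsOpen V → ContDiffOn ℝ (⊤ : ℕ∞) F V → Set.MapsTo F V U → D k V (p ∘ F)

/-- The `d`-skeleton plot family: the smallest diffeology on `X` containing all
plots of `X` of dimension `≤ d` (defined as the intersection of all diffeologies
containing those plots). -/
def skelPlots {X : Type*} (D : PlotFamily X) (d : ℕ) : PlotFamily X :=
  fun n U p => ∀ P : PlotFamily X, IsDiffeology P →
    (∀ (k : ℕ), k ≤ d → ∀ (V : Set (Fin k → ℝ)) (q : (Fin k → ℝ) → X), D k V q → P k V q) →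
    P n U p

/-- the `d`-skeleton is left adjoint to the `d`-coskeleton:
`f : A_d → X` is smooth iff `f : A → X_{(d)}` is smooth. -/
theorem skel_cosk_adjoint {A : Type u} {X : Type v} (DA : PlotFamily A) (DX : PlotFamily X)
    (hA : IsDiffeology DA) (hX : IsDiffeology DX) (d : ℕ) (hd : 0 < d) (f : A → X) :
    IsSmoothMap (skelPlots DA d) DX f ↔ IsSmoothMap DA (coskPlots DX d) f := by
  constructor
  · intro hf n U p hp
    refine ⟨hA.isOpen hp, ?_⟩
    intro k hk V F hV hF hmap
    have hpF : DA k V (p ∘ F) := hA.precomp hp hV hF hmap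
    have hskel : skelPlots DA d k V (p ∘ F) := fun P hP hcont => hcont k hk V (p ∘ F) hpF
    exact hf hskel
  · intro hf n U p hp
    have hP : IsDiffeology (fun n U q => DX n U (f ∘ q) : PlotFamily A) := {
      isOpen := fun h => hX.isOpen h
      const := fun n U hU x => hX.const n U hU (f x)
      congr := fun h heq => hX.congr h (fun x hx => by
        simp only [Function.comp_apply, heq x hx])
      locality := fun hU h => hX.locality hU (fun x hx => h x hx)
      precomp := fun h hV hF hmap => hX.precomp h hV hF hmap }
    apply hp _ hP
    intro k hk V q hq
    have h1 := (hf hq).2 k hk V id (hA.isOpen hq) contDiffOn_id (Set.mapsTo_id V)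
    simpa using h1
end

section
/- A diffeological space X is 1-coskeletal if and only if for every diffeological space A, every set-theoretic map A → X that sends smooth curves (plots with 1-dimensional domain) to plots of X is smooth. -/
private lemma zeroDimPlot {X : Type u} {D : PlotFamily X} (hD : IsDiffeology D)
    {V : Set (Fin 0 → ℝ)} (hV : IsOpen V) (q : (Fin 0 → ℝ) → X) : D 0 V q := by
  rcases V.eq_empty_or_nonempty with rfl | ⟨v, hv⟩
  · exact hD.locality isOpen_empty (fun x hx => absurd hx (Set.notMem_empty x))
  · refine hD.congr (hD.const 0 V hV (q v)) (fun x hx => ?_)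
    have : x = v := by funext i; exact i.elim0
    rw [this]


private def subDiffeo {n : ℕ} (U : Set (Fin n → ℝ)) :
    PlotFamily (ULift.{u} {x : Fin n → ℝ // x ∈ U}) :=
  fun _ V q => IsOpen V ∧ ContDiffOn ℝ (⊤ : ℕ∞) (fun v => ((q v).down : Fin n → ℝ)) V

private lemma subDiffeo_isDiffeology {n : ℕ} (U : Set (Fin n → ℝ)) :
    IsDiffeology (subDiffeo.{u} U) := by
  constructor
  · intro _ _ _ h; exact h.1
  · intro k V hV a; exact ⟨hV, contDiffOn_const⟩
  · intro k V p' q' h he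
    exact ⟨h.1, h.2.congr (fun x hx => by rw [he x hx])⟩
  · intro k V p' hV h
    refine ⟨hV, contDiffOn_of_locally_contDiffOn fun x hx => ?_⟩
    obtain ⟨W, hWo, hxW, hWU, _, hW⟩ := h x hx
    exact ⟨W, hWo, hxW, hW.mono Set.inter_subset_right⟩
  · intro k m V' W p' F h hW hF hFW
    exact ⟨hW, h.2.comp hF hFW⟩

/-- `X` is `1`-coskeletal iff for every diffeological space `A`, every
set-theoretic map `A → X` sending plots with `1`-dimensional domain (smooth curves)
to plots of `X` is smooth. -/
theorem one_coskeletal_iff_curve_criterion {X : Type u} (D : PlotFamily X)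
    (hD : IsDiffeology D) :
    D = coskPlots D 1 ↔
      ∀ (A : Type u) (DA : PlotFamily A), IsDiffeology DA → ∀ f : A → X,
        (∀ (V : Set (Fin 1 → ℝ)) (q : (Fin 1 → ℝ) → A), DA 1 V q → D 1 V (f ∘ q)) →
        IsSmoothMap DA D f := by
  constructor
  · intro hcosk A DA hDA f hf n U p hp
    rw [hcosk]
    refine ⟨hDA.isOpen hp, ?_⟩
    intro k hk V F hV hF hFU
    interval_cases k
    · exact zeroDimPlot hD hV _
    · have h1 : DA 1 V (p ∘ F) := hDA.precomp hp hV hF hFU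
      exact hf V (p ∘ F) h1
  · intro H
    funext n U p
    apply propext
    constructor
    · intro h
      exact ⟨hD.isOpen h, fun k _ V F hV hF hFU => hD.precomp h hV hF hFU⟩
    · rintro ⟨hU, hcos⟩
      rcases U.eq_empty_or_nonempty with rfl | ⟨x0, hx0⟩
      · exact hD.locality isOpen_empty (fun x hx => absurd hx (Set.notMem_empty x))
      · classical
        let A : Type u := ULift.{u} {x : Fin n → ℝ // x ∈ U}
        let DA : PlotFamily A := subDiffeo.{u} U
        have hDA : IsDiffeology DA := subDiffeo_isDiffeology U
        let f : A → X := fun a => p a.down.val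
        have hf : ∀ (V : Set (Fin 1 → ℝ)) (q : (Fin 1 → ℝ) → A),
            DA 1 V q → D 1 V (f ∘ q) := by
          rintro V q ⟨hV, hc⟩
          exact hcos 1 le_rfl V (fun v => ((q v).down : Fin n → ℝ)) hV hc
            (fun v hv => (q v).down.2)
        have hsm := H A DA hDA f hf
        let q : (Fin n → ℝ) → A := fun x =>
          if h : x ∈ U then ⟨⟨x, h⟩⟩ else ⟨⟨x0, hx0⟩⟩
        have hq : DA n U q := by
          refine ⟨hU, contDiffOn_id.congr fun x hx => ?_⟩
          simp only [q, dif_pos hx]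
          rfl
        have := hsm hq
        refine hD.congr this (fun x hx => ?_)
        simp only [Function.comp, f, q, dif_pos hx]
end

section
/- The d-skeleton functor preserves quotients: if π : X → Y is a diffeological quotient map (the diffeology of Y is final for π, and π is surjective), then π : X_d → Y_d is also a diffeological quotient map. -/
/-- `f : (X, DX) → (Y, DY)` is a diffeological quotient map (subduction): `f` is
surjective and `DY` is final for `f`, i.e. a parametrization `q` with open domain
is a plot of `Y` exactly when it locally factors through `f` via plots of `X`. -/
def IsDQuotientMap {X Y : Type*} (DX : PlotFamily X) (DY : PlotFamily Y) (f : X → Y) : Prop :=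
  Function.Surjective f ∧
    ∀ (n : ℕ) (U : Set (Fin n → ℝ)) (q : (Fin n → ℝ) → Y),
      DY n U q ↔ (IsOpen U ∧ ∀ x ∈ U, ∃ W, IsOpen W ∧ x ∈ W ∧ W ⊆ U ∧
        ∃ p : (Fin n → ℝ) → X, DX n W p ∧ ∀ y ∈ W, q y = f (p y))

theorem skel_isDiffeology {X : Type*} {D : PlotFamily X} (hX : IsDiffeology D) (d : ℕ) :
    IsDiffeology (skelPlots D d) := by
  constructor
  · intro n U p h
    exact hX.isOpen (h D hX (fun k _ V q hq => hq))
  · intro n U hU x P hP hgen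
    exact hP.const n U hU x
  · intro n U p q hp hpq P hP hgen
    exact hP.congr (hp P hP hgen) hpq
  · intro n U p hU h P hP hgen
    exact hP.locality hU (fun x hx => by
      obtain ⟨W, hW, hxW, hWU, hD⟩ := h x hx
      exact ⟨W, hW, hxW, hWU, hD P hP hgen⟩)
  · intro n k U V p F hp hV hF hFVU P hP hgen
    exact hP.precomp (hp P hP hgen) hV hF hFVU

theorem skel_gen {X : Type*} {D : PlotFamily X} {d k : ℕ} (hk : k ≤ d)
    {V : Set (Fin k → ℝ)} {q : (Fin k → ℝ) → X} (hq : D k V q) : skelPlots D d k V q :=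
  fun _P _hP hgen => hgen k hk V q hq

/-- If `f` sends plots of dimension `≤ d` to plots of `Y`, then `f` is smooth for the
`d`-skeleton diffeologies. -/
theorem skel_smooth {X Y : Type*} {DX : PlotFamily X} {DY : PlotFamily Y}
    (hY : IsDiffeology DY) (d : ℕ) (f : X → Y)
    (hfd : ∀ k, k ≤ d → ∀ (V : Set (Fin k → ℝ)) (q : (Fin k → ℝ) → X),
      DX k V q → DY k V (f ∘ q)) :
    IsSmoothMap (skelPlots DX d) (skelPlots DY d) f := by
  have hSY := skel_isDiffeology hY d
  intro n U p hp
  refine hp (fun n U p => skelPlots DY d n U (f ∘ p)) ?_ ?_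
  · constructor
    · intro n U p h; exact hSY.isOpen h
    · intro n U hU x; exact hSY.const n U hU (f x)
    · intro n U p q hp hpq
      exact hSY.congr hp (fun x hx => congrArg f (hpq x hx))
    · intro n U p hU h
      exact hSY.locality hU (fun x hx => by
        obtain ⟨W, hW, hxW, hWU, hD⟩ := h x hx
        exact ⟨W, hW, hxW, hWU, hD⟩)
    · intro n k U V p F hp hV hF hFVU
      exact hSY.precomp hp hV hF hFVU
  · intro k hk V q hq
    exact skel_gen hk (hfd k hk V q hq)

/-- the `d`-skeleton functor preserves diffeological quotient maps. -/
theorem skel_preserves_quotient {X Y : Type*} (DX : PlotFamily X) (DY : PlotFamily Y)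
    (hX : IsDiffeology DX) (hY : IsDiffeology DY) (d : ℕ) (hd : 0 < d) (f : X → Y)
    (hf : IsDQuotientMap DX DY f) :
    IsDQuotientMap (skelPlots DX d) (skelPlots DY d) f := by
  have hSX := skel_isDiffeology hX d
  have hSY := skel_isDiffeology hY d
  -- f sends plots of dimension ≤ d to plots of Y
  have hfd : ∀ k, k ≤ d → ∀ (V : Set (Fin k → ℝ)) (q : (Fin k → ℝ) → X),
      DX k V q → DY k V (f ∘ q) := by
    intro k _hk V q hq
    exact (hf.2 k V (f ∘ q)).2 ⟨hX.isOpen hq,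
      fun x hx => ⟨V, hX.isOpen hq, hx, Set.Subset.rfl, q, hq, fun y _ => rfl⟩⟩
  have hsmooth := skel_smooth hY d f hfd
  -- The candidate plot family on Y: local factorization via skeleton plots of X
  set E : PlotFamily Y := fun n U q => IsOpen U ∧ ∀ x ∈ U, ∃ W, IsOpen W ∧ x ∈ W ∧ W ⊆ U ∧
    ∃ p : (Fin n → ℝ) → X, skelPlots DX d n W p ∧ ∀ y ∈ W, q y = f (p y) with hE
  have hEdiff : IsDiffeology E := by
    constructor
    · intro n U p h; exact h.1
    · intro n U hU y
      obtain ⟨x, hx⟩ := hf.1 y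
      exact ⟨hU, fun z hz => ⟨U, hU, hz, Set.Subset.rfl, fun _ => x,
        hSX.const n U hU x, fun _ _ => hx.symm⟩⟩
    · intro n U p q hp hpq
      refine ⟨hp.1, fun x hx => ?_⟩
      obtain ⟨W, hW, hxW, hWU, r, hr, hqr⟩ := hp.2 x hx
      exact ⟨W, hW, hxW, hWU, r, hr, fun y hy => (hpq y (hWU hy)).trans (hqr y hy)⟩
    · intro n U p hU h
      refine ⟨hU, fun x hx => ?_⟩
      obtain ⟨W, hW, hxW, hWU, hEp⟩ := h x hx
      obtain ⟨W', hW', hxW', hW'W, r, hr, hqr⟩ := hEp.2 x hxW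
      exact ⟨W', hW', hxW', hW'W.trans hWU, r, hr, hqr⟩
    · intro n k U V p F hp hV hF hFVU
      refine ⟨hV, fun x hx => ?_⟩
      obtain ⟨W, hW, hFxW, hWU, r, hr, hqr⟩ := hp.2 (F x) (hFVU hx)
      refine ⟨V ∩ F ⁻¹' W, hF.continuousOn.isOpen_inter_preimage hV hW,
        ⟨hx, hFxW⟩, Set.inter_subset_left, r ∘ F, ?_, fun y hy => hqr (F y) hy.2⟩
      exact hSX.precomp hr (hF.continuousOn.isOpen_inter_preimage hV hW)
        (hF.mono Set.inter_subset_left) (fun y hy => hy.2)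
  refine ⟨hf.1, fun n U q => ⟨fun hq => ?_, fun hq => ?_⟩⟩
  · -- forward: skel DY plots factor locally, via E
    refine hq E hEdiff ?_
    intro k hk V r hr
    obtain ⟨hVopen, hloc⟩ := (hf.2 k V r).1 hr
    refine ⟨hVopen, fun x hx => ?_⟩
    obtain ⟨W, hW, hxW, hWV, p, hp, hrp⟩ := hloc x hx
    exact ⟨W, hW, hxW, hWV, p, skel_gen hk hp, hrp⟩
  · -- backward: local factorization via smoothness + locality + congr
    obtain ⟨hU, hloc⟩ := hq
    refine hSY.locality hU (fun x hx => ?_)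
    obtain ⟨W, hW, hxW, hWU, p, hp, hqp⟩ := hloc x hx
    exact ⟨W, hW, hxW, hWU, hSY.congr (hsmooth hp) hqp⟩
end

section
/- The d-skeleton functor does not preserve finite products: the diffeology of (ℝ^{d+1})_d is strictly contained in the product diffeology of (ℝ^d)_d × ℝ_d = ℝ^d × ℝ; in particular the identity (ℝ^{d+1})_d → (ℝ^d)_d × ℝ_d is smooth but not a diffeomorphism. -/
/-- The standard diffeology on a normed space: plots are the parametrizations
with open domain that are `C^∞` on their domain. -/
def stdPlots (E : Type*) [NormedAddCommGroup E] [NormedSpace ℝ E] : PlotFamily E :=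
  fun n U p => IsOpen U ∧ ContDiffOn ℝ (⊤ : ℕ∞) p U

/-- The product diffeology: plots are the parametrizations whose composites with
the two projections are plots. -/
def prodPlots {A B : Type*} (DA : PlotFamily A) (DB : PlotFamily B) : PlotFamily (A × B) :=
  fun n U p => DA n U (fun x => (p x).1) ∧ DB n U (fun x => (p x).2)


section Aux

lemma isDiffeology_std (E : Type*) [NormedAddCommGroup E] [NormedSpace ℝ E] :
    IsDiffeology (stdPlots E) where
  isOpen h := h.1
  const _ _ hU _ := ⟨hU, contDiffOn_const⟩
  congr h hq := ⟨h.1, h.2.congr hq⟩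
  locality hU h := by
    refine ⟨hU, contDiffOn_of_locally_contDiffOn fun x hx => ?_⟩
    obtain ⟨W, hWo, hxW, hWU, hW⟩ := h x hx
    exact ⟨W, hWo, hxW, hW.2.mono Set.inter_subset_right⟩
  precomp h hV hF hM := ⟨hV, h.2.comp hF hM⟩

lemma IsDiffeology.prod {A B : Type*} {DA : PlotFamily A} {DB : PlotFamily B}
    (hA : IsDiffeology DA) (hB : IsDiffeology DB) : IsDiffeology (prodPlots DA DB) where
  isOpen h := hA.isOpen h.1
  const n U hU x := ⟨hA.const n U hU x.1, hB.const n U hU x.2⟩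
  congr h hq :=
    ⟨hA.congr h.1 fun x hx => congrArg Prod.fst (hq x hx),
     hB.congr h.2 fun x hx => congrArg Prod.snd (hq x hx)⟩
  locality hU h :=
    ⟨hA.locality hU fun x hx => (h x hx).imp fun W hW => ⟨hW.1, hW.2.1, hW.2.2.1, hW.2.2.2.1⟩,
     hB.locality hU fun x hx => (h x hx).imp fun W hW => ⟨hW.1, hW.2.1, hW.2.2.1, hW.2.2.2.2⟩⟩
  precomp h hV hF hM := ⟨hA.precomp h.1 hV hF hM, hB.precomp h.2 hV hF hM⟩

/-- Pullback of a plot family along a map. -/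
def pullbackPlots {X Y : Type*} (D : PlotFamily Y) (f : X → Y) : PlotFamily X :=
  fun n U p => D n U (f ∘ p)

lemma IsDiffeology.pullback {X Y : Type*} {D : PlotFamily Y} (hD : IsDiffeology D) (f : X → Y) :
    IsDiffeology (pullbackPlots D f) where
  isOpen h := hD.isOpen h
  const n U hU x := hD.const n U hU (f x)
  congr h hq := hD.congr h fun x hx => congrArg f (hq x hx)
  locality hU h := hD.locality hU fun x hx => h x hx
  precomp h hV hF hM := hD.precomp h hV hF hM

/-- The witness diffeology: plots whose images locally have empty interior. -/
def smallPlots (E : Type*) [NormedAddCommGroup E] [NormedSpace ℝ E] [Nontrivial E] :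
    PlotFamily E :=
  fun _ U p => IsOpen U ∧ ∀ x ∈ U, ∃ W, IsOpen W ∧ x ∈ W ∧ W ⊆ U ∧ interior (p '' W) = ∅

lemma isDiffeology_small (E : Type*) [NormedAddCommGroup E] [NormedSpace ℝ E] [Nontrivial E] :
    IsDiffeology (smallPlots E) where
  isOpen h := h.1
  const n U hU x := by
    refine ⟨hU, fun y hy => ⟨U, hU, hy, Set.Subset.rfl, ?_⟩⟩
    refine Set.eq_empty_of_subset_empty ?_
    calc interior ((fun _ => x) '' U) ⊆ interior {x} :=
          interior_mono (Set.image_subset_iff.2 fun _ _ => rfl)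
      _ = ∅ := by
          rw [interior_eq_empty_iff_dense_compl]
          exact dense_compl_singleton x
  congr {n U p q} h hq := by
    refine ⟨h.1, fun x hx => ?_⟩
    obtain ⟨W, hWo, hxW, hWU, hW⟩ := h.2 x hx
    refine ⟨W, hWo, hxW, hWU, ?_⟩
    rw [Set.image_congr fun y hy => hq y (hWU hy)]
    exact hW
  locality hU h := by
    refine ⟨hU, fun x hx => ?_⟩
    obtain ⟨W, hWo, hxW, hWU, hW⟩ := h x hx
    obtain ⟨W', hW'o, hxW', hW'W, hW'⟩ := hW.2 x hxW
    exact ⟨W', hW'o, hxW', hW'W.trans hWU, hW'⟩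
  precomp {n k U V p F} h hV hF hM := by
    refine ⟨hV, fun x hx => ?_⟩
    obtain ⟨W, hWo, hFxW, hWU, hW⟩ := h.2 (F x) (hM hx)
    refine ⟨V ∩ F ⁻¹' W, hF.continuousOn.isOpen_inter_preimage hV hWo, ⟨hx, hFxW⟩,
      Set.inter_subset_left, ?_⟩
    refine Set.eq_empty_of_subset_empty ?_
    rw [← hW]
    refine interior_mono ?_
    rintro _ ⟨y, ⟨_, hyW⟩, rfl⟩
    exact ⟨F y, hyW, rfl⟩

lemma small_contains_lowdim (d : ℕ) :
    ∀ (k : ℕ), k ≤ d → ∀ (V : Set (Fin k → ℝ)) (q : (Fin k → ℝ) → (Fin (d + 1) → ℝ)),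
      stdPlots (Fin (d + 1) → ℝ) k V q → smallPlots (Fin (d + 1) → ℝ) k V q := by
  intro k hk V q hq
  refine ⟨hq.1, fun x hx => ?_⟩
  obtain ⟨r, hr, hball⟩ := Metric.isOpen_iff.1 hq.1 x hx
  refine ⟨Metric.ball x r, Metric.isOpen_ball, Metric.mem_ball_self hr, hball, ?_⟩
  rw [interior_eq_empty_iff_dense_compl]
  refine ContDiffOn.dense_compl_image_of_dimH_lt_finrank
    (((hq.2.mono hball).of_le (by simp))) (convex_ball x r) Set.Subset.rfl ?_
  calc dimH (Metric.ball x r) ≤ dimH (Set.univ : Set (Fin k → ℝ)) :=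
        dimH_mono (Set.subset_univ _)
    _ = k := Real.dimH_univ_pi_fin k
    _ < (d + 1 : ℕ) := by exact_mod_cast Nat.lt_succ_of_le hk
    _ = Module.finrank ℝ (Fin (d + 1) → ℝ) := by
        rw [Module.finrank_fintype_fun_eq_card, Fintype.card_fin]

end Aux

/-- the `d`-skeleton functor does not preserve finite products: the
identity `(ℝ^{d+1})_d → (ℝ^d)_d × ℝ_d = ℝ^d × ℝ` is smooth, but its inverse is
not; so the `d`-skeleton diffeology of `ℝ^{d+1}` is strictly finer than the
product diffeology of `ℝ^d × ℝ`. -/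
theorem skel_not_preserving_products (d : ℕ) (hd : 0 < d) :
    IsSmoothMap (skelPlots (stdPlots (Fin (d + 1) → ℝ)) d)
      (prodPlots (stdPlots (Fin d → ℝ)) (stdPlots ℝ))
      (fun x => (fun i => x i.castSucc, x (Fin.last d))) ∧
    ¬ IsSmoothMap (prodPlots (stdPlots (Fin d → ℝ)) (stdPlots ℝ))
      (skelPlots (stdPlots (Fin (d + 1) → ℝ)) d)
      (fun q => Fin.snoc q.1 q.2) := by
  constructor
  · intro n U p hp
    refine hp (pullbackPlots (prodPlots (stdPlots (Fin d → ℝ)) (stdPlots ℝ))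
        (fun x => (fun i => x i.castSucc, x (Fin.last d))))
      (((isDiffeology_std (Fin d → ℝ)).prod (isDiffeology_std ℝ)).pullback _) ?_
    intro k _ V q hq
    refine ⟨⟨hq.1, ?_⟩, ⟨hq.1, ?_⟩⟩
    · exact contDiffOn_pi.2 fun i =>
        (ContinuousLinearMap.proj (R := ℝ) (φ := fun _ : Fin (d + 1) => ℝ)
          i.castSucc).contDiff.comp_contDiffOn hq.2
    · exact (ContinuousLinearMap.proj (R := ℝ) (φ := fun _ : Fin (d + 1) => ℝ)
        (Fin.last d)).contDiff.comp_contDiffOn hq.2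
  · intro hsm
    have hprod : prodPlots (stdPlots (Fin d → ℝ)) (stdPlots ℝ) (d + 1) Set.univ
        (fun x : Fin (d + 1) → ℝ => ((fun i => x i.castSucc), x (Fin.last d))) := by
      refine ⟨⟨isOpen_univ, ?_⟩, ⟨isOpen_univ, ?_⟩⟩
      · exact (contDiff_pi.2 fun i : Fin d =>
          (ContinuousLinearMap.proj (R := ℝ) (φ := fun _ : Fin (d + 1) => ℝ)
            i.castSucc).contDiff).contDiffOn
      · exact (ContinuousLinearMap.proj (R := ℝ) (φ := fun _ : Fin (d + 1) => ℝ)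
          (Fin.last d)).contDiff.contDiffOn
    have hskel := hsm hprod
    have hsmall := hskel (smallPlots (Fin (d + 1) → ℝ))
      (isDiffeology_small _) (small_contains_lowdim d)
    have hid : ((fun q : (Fin d → ℝ) × ℝ => Fin.snoc q.1 q.2) ∘
        fun x : Fin (d + 1) → ℝ => ((fun i => x i.castSucc), x (Fin.last d))) = id := by
      funext x
      exact Fin.snoc_init_self x
    rw [hid] at hsmall
    obtain ⟨W, hWo, hxW, _, hW⟩ := hsmall.2 0 (Set.mem_univ 0)
    rw [Set.image_id, hWo.interior_eq] at hW
    rw [hW] at hxW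
    exact hxW
end

section
/- If X is a d-coskeletal diffeological space, then for any diffeological space A, the function space D(A, X) with the functional diffeology is also d-coskeletal. -/
/-- The set of smooth maps `(A, DA) → (X, DX)`. -/
def SmoothMaps {A X : Type*} (DA : PlotFamily A) (DX : PlotFamily X) :=
  { f : A → X // IsSmoothMap DA DX f }

/-- The functional diffeology on `D(A, X)`: `p : U → D(A, X)` is a plot iff `U` is
open and the adjoint `U × A → X` is smooth, i.e. it sends each plot of the product
`U × A` (a pair of a smooth map `F : V → U` and a plot `r : V → A`) to a plot of `X`. -/
def funcPlots {A X : Type*} (DA : PlotFamily A) (DX : PlotFamily X) :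
    PlotFamily (SmoothMaps DA DX) :=
  fun n U p => IsOpen U ∧
    ∀ (k : ℕ) (V : Set (Fin k → ℝ)) (F : (Fin k → ℝ) → (Fin n → ℝ)) (r : (Fin k → ℝ) → A),
      IsOpen V → ContDiffOn ℝ (⊤ : ℕ∞) F V → Set.MapsTo F V U → DA k V r →
        DX k V (fun v => (p (F v)).1 (r v))

/-- if `X` is `d`-coskeletal, then the function space `D(A, X)` with
the functional diffeology is `d`-coskeletal, for any diffeological space `A`. -/
theorem funcPlots_coskeletal {A X : Type*} (DA : PlotFamily A) (DX : PlotFamily X)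
    (hA : IsDiffeology DA) (hX : IsDiffeology DX) (d : ℕ) (hd : 0 < d)
    (hcosk : DX = coskPlots DX d) :
    funcPlots DA DX = coskPlots (funcPlots DA DX) d := by
  funext n U p
  apply propext
  constructor
  · rintro ⟨hU, hp⟩
    refine ⟨hU, fun k hk V F hV hF hFU => ⟨hV, ?_⟩⟩
    intro k' V' F' r hV' hF' hF'V hr
    have := hp k' V' (F ∘ F') r hV'
      (hF.comp hF' (fun x hx => hF'V hx)) (fun x hx => hFU (hF'V hx)) hr
    exact this
  · rintro ⟨hU, hp⟩
    refine ⟨hU, ?_⟩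
    intro k V F r hV hF hFU hr
    rw [congrFun (congrFun (congrFun hcosk k) V) (fun v => (p (F v)).1 (r v))]
    refine ⟨hV, ?_⟩
    intro j hj W G hW hG hGV
    have hfp : funcPlots DA DX j W (p ∘ (F ∘ G)) :=
      hp j hj W (F ∘ G) hW (hF.comp hG (fun x hx => hGV hx)) (fun x hx => hFU (hGV hx))
    have hrG : DA j W (r ∘ G) := hA.precomp hr hW hG hGV
    have := hfp.2 j W id (r ∘ G) hW contDiffOn_id (Set.mapsTo_id W) hrG
    exact this
end
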